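/- arXiv:math/0512571 — 2 statements merged into one kernel-verified Lean document; each statement's English description precedes it below -/
import Mathlib

section
/- For a generic well-poised sequence, the summand F_k(a₁,…,a_{r+1}; q, z) := z^k · ∏_i (a_i;q)_k / [(q;q)_k · ∏_{i=2}^{r+1} (a₁q/a_i;q)_k] satisfies the contiguous relation F_k(a₁,…,a_r q, a_{r+1}) − F_k(a₁,…,a_r, a_{r+1} q) = α · F_{k−1}(a₁q², a₂q, …, a_{r+1}q), where α = (a_r − a_{r+1})(1 − a₁/(a_r a_{r+1}))(1−a₁)(1−a₁q)(1−a₂)⋯(1−a_{r−1}) z / [(1−a₁/a_r)(1−a₁/a_{r+1})(1−a₁q/a₂)⋯(1−a₁q/a_{r+1})]. -/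
/-!
Splitting off the first or last factor of each q-shifted factorial, both terms on the left and
the term `F_{k-1}(a₁q², a₂q, …)` on the right become multiples of one common factor `G`:
`F_k(…, a_j q, …) = G ∏_{i ≠ j} (1 - a_i) · (1 - a_j q^k)(1 - a₁q^k/a_j)/(1 - a₁/a_j)`
for `j = r, r + 1`, and `α F_{k-1}(…)` is `G ∏_{i=2}^{r-1} (1 - a_i)` times
`(a_r - a_{r+1})(1 - a₁/(a_r a_{r+1}))(1 - q^k)(1 - a₁q^k)/((1 - a₁/a_r)(1 - a₁/a_{r+1}))`.
The relation is then a rational identity in `a₁, a_r, a_{r+1}` and `Q = q^k`.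
-/

/-- The q-shifted factorial `(x;q)_n`. -/
def qPoch {K : Type*} [Field K] (q x : K) (n : ℕ) : K :=
  ∏ j ∈ Finset.range n, (1 - x * q ^ j)

/-- The `k`-th term of a well-poised basic hypergeometric series with
upper parameters `a 1, …, a (r+1)`:
`F_k = z^k ∏_{i=1}^{r+1} (a_i;q)_k / ((q;q)_k ∏_{i=2}^{r+1} (a₁q/a_i;q)_k)`. -/
def wpTerm {K : Type*} [Field K] (q z : K) (r : ℕ) (a : ℕ → K) (k : ℕ) : K :=
  z ^ k * (∏ i ∈ Finset.Icc 1 (r + 1), qPoch q (a i) k) /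
    (qPoch q q k * ∏ i ∈ Finset.Icc 2 (r + 1), qPoch q (a 1 * q / a i) k)

open Finset Function

section

variable {K : Type*} [Field K]

section QPochhammer

variable (q x : K) (n : ℕ)

theorem qPoch_succ : qPoch q x (n + 1) = qPoch q x n * (1 - x * q ^ n) :=
  prod_range_succ _ _

theorem qPoch_succ' : qPoch q x (n + 1) = (1 - x) * qPoch q (x * q) n := by
  simp only [qPoch, prod_range_succ', pow_zero, mul_one, pow_succ', mul_comm q, mul_assoc]
  exact mul_comm _ _

theorem one_sub_mul_qPoch_mul_succ :
    (1 - x) * qPoch q (x * q) (n + 1) = qPoch q x (n + 1) * (1 - x * q ^ (n + 1)) := by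
  rw [← qPoch_succ', qPoch_succ]

end QPochhammer

theorem wpTerm_eq_mul_prod_div (q z : K) (r : ℕ) (a : ℕ → K) (k : ℕ) :
    wpTerm q z r a k = z ^ k * qPoch q (a 1) k / qPoch q q k *
      ∏ i ∈ Icc 2 (r + 1), qPoch q (a i) k / qPoch q (a 1 * q / a i) k := by
  have hIcc : Icc 1 (r + 1) = insert 1 (Icc 2 (r + 1)) := by
    ext i; simp only [mem_Icc, mem_insert]; omega
  rw [wpTerm, hIcc, prod_insert (by simp), prod_div_distrib]
  ring

theorem contiguity_rational_identity {x y b Q : K} (hx : x ≠ 0) (hy : y ≠ 0)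
    (hbx : 1 - b / x ≠ 0) (hby : 1 - b / y ≠ 0) :
    (1 - y) * ((1 - x * Q) * (1 - b * Q / x) / (1 - b / x))
      - (1 - x) * ((1 - y * Q) * (1 - b * Q / y) / (1 - b / y))
      = (x - y) * (1 - b / (x * y)) * ((1 - Q) * (1 - b * Q)) / ((1 - b / x) * (1 - b / y)) := by
  have hxb : x - b ≠ 0 := by rwa [one_sub_div hx, div_ne_zero_iff, and_iff_left hx] at hbx
  have hyb : y - b ≠ 0 := by rwa [one_sub_div hy, div_ne_zero_iff, and_iff_left hy] at hby
  rw [one_sub_div hx, one_sub_div hy]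
  field_simp
  ring

theorem qPoch_mul_div_qPoch_div_eq {q x b : K} {m : ℕ} (hQ : qPoch q (b * q / x) (m + 1) ≠ 0) :
    qPoch q (x * q) (m + 1) / qPoch q (b / x) (m + 1)
      = qPoch q (x * q) m / qPoch q (b * q / x) (m + 1)
        * ((1 - x * q ^ (m + 1)) * (1 - b * q ^ (m + 1) / x) / (1 - b / x)) := by
  have hrel := one_sub_mul_qPoch_mul_succ q (b / x) m
  rw [div_mul_eq_mul_div, div_mul_eq_mul_div] at hrel
  by_cases hP : qPoch q (b / x) (m + 1) = 0
  · have hc : 1 - b / x = 0 := by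
      rw [hP, zero_mul] at hrel
      exact (mul_eq_zero.1 hrel).resolve_right hQ
    rw [hP, hc]
    simp
  · have hc : 1 - b / x ≠ 0 := by
      rw [qPoch_succ'] at hP
      exact left_ne_zero_of_mul hP
    rw [qPoch_succ q (x * q) m]
    generalize qPoch q (b / x) (m + 1) = P at *
    generalize qPoch q (b * q / x) (m + 1) = Q at *
    field_simp
    linear_combination (qPoch q (x * q) m * (1 - x * q * q ^ m)) * hrel

def wpContiguityFactor (q z : K) (r : ℕ) (a : ℕ → K) (m : ℕ) : K :=
  z ^ (m + 1) * qPoch q (a 1) (m + 1) / qPoch q q (m + 1) *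
    ∏ i ∈ Icc 2 (r + 1), qPoch q (a i * q) m / qPoch q (a 1 * q / a i) (m + 1)

theorem wpTerm_update_mul_succ {q z : K} {r j m : ℕ} {a : ℕ → K} (hq : q ≠ 0)
    (hj : j ∈ Icc 2 (r + 1)) (hden : qPoch q (a 1 * q / a j) (m + 1) ≠ 0) :
    wpTerm q z r (update a j (a j * q)) (m + 1)
      = wpContiguityFactor q z r a m * (∏ i ∈ (Icc 2 (r + 1)).erase j, (1 - a i))
        * ((1 - a j * q ^ (m + 1)) * (1 - a 1 * q ^ (m + 1) / a j) / (1 - a 1 / a j)) := by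
  have hj1 : (1 : ℕ) ≠ j := by rintro rfl; simp at hj
  have hother : ∀ i ∈ (Icc 2 (r + 1)).erase j,
      qPoch q (update a j (a j * q) i) (m + 1) / qPoch q (a 1 * q / update a j (a j * q) i) (m + 1)
        = (1 - a i) * (qPoch q (a i * q) m / qPoch q (a 1 * q / a i) (m + 1)) := fun i hi => by
    rw [update_of_ne (ne_of_mem_erase hi), qPoch_succ', mul_div_assoc]
  rw [wpTerm_eq_mul_prod_div, update_of_ne hj1, ← mul_prod_erase _ _ hj, update_self,
    mul_div_mul_right _ _ hq, qPoch_mul_div_qPoch_div_eq hden, prod_congr rfl hother,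
    prod_mul_distrib, wpContiguityFactor, ← mul_prod_erase _ _ hj]
  ring

theorem mul_wpTerm_shift_eq {q z : K} {r m : ℕ} {a : ℕ → K} (hq : q ≠ 0)
    (hqq : qPoch q q (m + 1) ≠ 0) :
    z * (1 - a 1) * (1 - a 1 * q) / (∏ i ∈ Icc 2 (r + 1), (1 - a 1 * q / a i))
        * wpTerm q z r (fun i => if i = 1 then a 1 * q ^ 2 else a i * q) m
      = wpContiguityFactor q z r a m * ((1 - q ^ (m + 1)) * (1 - a 1 * q ^ (m + 1))) := by
  have hshifted : wpTerm q z r (fun i => if i = 1 then a 1 * q ^ 2 else a i * q) m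
      = z ^ m * qPoch q (a 1 * q ^ 2) m / qPoch q q m *
          ∏ i ∈ Icc 2 (r + 1), qPoch q (a i * q) m / qPoch q (a 1 * q ^ 2 / a i) m := by
    rw [wpTerm_eq_mul_prod_div, if_pos rfl]
    refine congrArg _ (prod_congr rfl fun i hi => ?_)
    rw [if_neg (by rintro rfl; simp at hi), mul_div_mul_right _ _ hq]
  have hprod : (∏ i ∈ Icc 2 (r + 1), qPoch q (a i * q) m / qPoch q (a 1 * q ^ 2 / a i) m)
        / ∏ i ∈ Icc 2 (r + 1), (1 - a 1 * q / a i)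
      = ∏ i ∈ Icc 2 (r + 1), qPoch q (a i * q) m / qPoch q (a 1 * q / a i) (m + 1) := by
    rw [← prod_div_distrib]
    refine prod_congr rfl fun i _ => ?_
    rw [div_div, mul_comm (qPoch _ _ m), qPoch_succ', div_mul_eq_mul_div, mul_assoc, ← sq]
  have hfirst : (1 - a 1) * (1 - a 1 * q) * qPoch q (a 1 * q ^ 2) m / qPoch q q m
      = qPoch q (a 1) (m + 1) / qPoch q q (m + 1)
          * ((1 - q ^ (m + 1)) * (1 - a 1 * q ^ (m + 1))) := by
    rw [qPoch_succ q q m, ← pow_succ'] at hqq ⊢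
    obtain ⟨hqm, hqm'⟩ := mul_ne_zero_iff.1 hqq
    have hA : (1 - a 1) * (1 - a 1 * q) * qPoch q (a 1 * q ^ 2) m
        = qPoch q (a 1) (m + 1) * (1 - a 1 * q ^ (m + 1)) := by
      rw [← one_sub_mul_qPoch_mul_succ, qPoch_succ', mul_assoc (a 1) q q, ← sq, mul_assoc]
    rw [hA]
    field_simp
  rw [hshifted, wpContiguityFactor, ← hprod]
  linear_combination (z * z ^ m
      * ((∏ i ∈ Icc 2 (r + 1), qPoch q (a i * q) m / qPoch q (a 1 * q ^ 2 / a i) m)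
        / ∏ i ∈ Icc 2 (r + 1), (1 - a 1 * q / a i))) * hfirst

end

theorem wp_contiguous_one_general {K : Type*} [Field K] (q z : K) (r : ℕ) (a : ℕ → K) (k : ℕ)
    (hr : 2 ≤ r) (hk : 1 ≤ k) (hq : q ≠ 0) (ha : ∀ i, a i ≠ 0)
    (hqq : qPoch q q k ≠ 0)
    (hden : ∀ i ∈ Finset.Icc 2 (r + 1), qPoch q (a 1 * q / a i) k ≠ 0)
    (h5 : 1 - a 1 / a r ≠ 0) (h6 : 1 - a 1 / a (r + 1) ≠ 0) :
    wpTerm q z r (Function.update a r (a r * q)) k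
      - wpTerm q z r (Function.update a (r + 1) (a (r + 1) * q)) k
    = ((a r - a (r + 1)) * (1 - a 1 / (a r * a (r + 1))) * (1 - a 1) * (1 - a 1 * q) *
          (∏ i ∈ Finset.Icc 2 (r - 1), (1 - a i)) * z) /
        ((1 - a 1 / a r) * (1 - a 1 / a (r + 1)) *
          ∏ i ∈ Finset.Icc 2 (r + 1), (1 - a 1 * q / a i)) *
        wpTerm q z r (fun i => if i = 1 then a 1 * q ^ 2 else a i * q) (k - 1) := by
  obtain ⟨m, rfl⟩ : ∃ m, k = m + 1 := ⟨k - 1, by omega⟩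
  rw [Nat.add_sub_cancel]
  have hr_mem : r ∈ Icc 2 (r + 1) := mem_Icc.2 ⟨hr, by omega⟩
  have hr1_mem : r + 1 ∈ Icc 2 (r + 1) := mem_Icc.2 ⟨by omega, le_rfl⟩
  have herase_r : (Icc 2 (r + 1)).erase r = insert (r + 1) (Icc 2 (r - 1)) := by
    ext i; simp only [mem_erase, mem_Icc, mem_insert]; omega
  have herase_r1 : (Icc 2 (r + 1)).erase (r + 1) = insert r (Icc 2 (r - 1)) := by
    ext i; simp only [mem_erase, mem_Icc, mem_insert]; omega
  have hcoeff : ((a r - a (r + 1)) * (1 - a 1 / (a r * a (r + 1))) * (1 - a 1) * (1 - a 1 * q) *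
          (∏ i ∈ Icc 2 (r - 1), (1 - a i)) * z) /
        ((1 - a 1 / a r) * (1 - a 1 / a (r + 1)) * ∏ i ∈ Icc 2 (r + 1), (1 - a 1 * q / a i))
      = (a r - a (r + 1)) * (1 - a 1 / (a r * a (r + 1))) * (∏ i ∈ Icc 2 (r - 1), (1 - a i))
          / ((1 - a 1 / a r) * (1 - a 1 / a (r + 1)))
        * (z * (1 - a 1) * (1 - a 1 * q) / ∏ i ∈ Icc 2 (r + 1), (1 - a 1 * q / a i)) := by
    rw [mul_div_mul_comm]
    ring
  rw [wpTerm_update_mul_succ hq hr_mem (hden r hr_mem),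
    wpTerm_update_mul_succ hq hr1_mem (hden _ hr1_mem), herase_r, herase_r1,
    prod_insert (by simp), prod_insert (by simp only [mem_Icc]; omega), hcoeff, mul_assoc _ (_ / _),
    mul_wpTerm_shift_eq hq hqq]
  linear_combination (wpContiguityFactor q z r a m * ∏ i ∈ Icc 2 (r - 1), (1 - a i))
      * contiguity_rational_identity (Q := q ^ (m + 1)) (ha r) (ha (r + 1)) h5 h6

/-- The first contiguous relation for well-poised terms:
`F_k(a₁,…,a_r q, a_{r+1}) − F_k(a₁,…,a_r, a_{r+1} q) = α F_{k−1}(a₁q², a₂q, …, a_{r+1}q)`. -/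
theorem wp_contiguous_one {K : Type*} [Field K] (q z : K) (r : ℕ) (a : ℕ → K) (k : ℕ)
    (hr : 2 ≤ r) (hk : 1 ≤ k) (hq : q ≠ 0) (ha : ∀ i, a i ≠ 0)
    (hqq : qPoch q q k ≠ 0)
    (hden : ∀ i ∈ Finset.Icc 2 (r + 1), qPoch q (a 1 * q / a i) k ≠ 0)
    (hdenr : qPoch q (a 1 / a r) k ≠ 0)
    (hdenr1 : qPoch q (a 1 / a (r + 1)) k ≠ 0)
    (hden' : ∀ i ∈ Finset.Icc 2 (r + 1), qPoch q (a 1 * q ^ 2 / a i) (k - 1) ≠ 0)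
    (h5 : 1 - a 1 / a r ≠ 0) (h6 : 1 - a 1 / a (r + 1) ≠ 0)
    (h7 : ∀ i ∈ Finset.Icc 2 (r + 1), 1 - a 1 * q / a i ≠ 0) :
    wpTerm q z r (Function.update a r (a r * q)) k
      - wpTerm q z r (Function.update a (r + 1) (a (r + 1) * q)) k
    = ((a r - a (r + 1)) * (1 - a 1 / (a r * a (r + 1))) * (1 - a 1) * (1 - a 1 * q) *
          (∏ i ∈ Finset.Icc 2 (r - 1), (1 - a i)) * z) /
        ((1 - a 1 / a r) * (1 - a 1 / a (r + 1)) *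
          ∏ i ∈ Finset.Icc 2 (r + 1), (1 - a 1 * q / a i)) *
        wpTerm q z r (fun i => if i = 1 then a 1 * q ^ 2 else a i * q) (k - 1) :=
  wp_contiguous_one_general q z r a k hr hk hq ha hqq hden h5 h6
end

section
/- For nonnegative integers n and r ≥ 1, ∑_{s₁,…,s_r=0}^n ∏_{1≤i<j≤r} [(x_i q^{s_i} − x_j q^{s_j})(1 − a x_i x_j q^{s_i+s_j})]/[(x_i − x_j)(1 − a x_i x_j q^n)] · ∏_{i=1}^r q^{−(r−1)s_i} = (n+1) (q^{n+1};q^{n+1})_{r−1} / [q^{n·r(r−1)/2} (q;q)_{r−1}]. -/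
/-!
Let `m = r - 1` and `E_j(c; z) = z ^ j + c ^ (m - j) * z ^ (2m - j)` for `j < m`,
`E_m(c; z) = z ^ m`.
The determinant `det (E_j(c; y_i))` equals `∏_{i<j} (y_j - y_i) (1 - c y_i y_j)`: its columns are
unitriangular combinations of those of the projective Vandermonde matrix in `y_i` and `1 + c y_i²`,
because `1 + u ^ p` is a polynomial in `u` and `1 + u` with Dickson coefficients.
Hence each summand is `det (q ^ (-m s_i) E_j(a; x_i q ^ s_i)) / det (E_j(a q ^ n; x_i))`, and by
multilinearity the sum over `s` is the determinant whose rows are summed over `s_i`. Each column sum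
is a geometric sum times `E_j(a q ^ n; x_i)`, so the sum collapses to
`∏_{k<r} ∑_{t ≤ n} q ^ (-k t)`, which is the stated quotient of q-shifted factorials.
-/

open Finset

/-- `dicksonCoeff p d` is the coefficient of `a ^ d * x ^ (p - 2 * d)` in the Dickson polynomial
`D_p(x, a)` (`Polynomial.dickson 1 a p`); the expansion below is `D_p(1 + u, u) = 1 + u ^ p`. -/
def dicksonCoeff : ℕ → ℕ → ℤ
  | 0, 0 => 2
  | _ + 1, 0 => 1
  | 0, _ + 1 => 0
  | 1, _ + 1 => 0
  | p + 2, d + 1 => dicksonCoeff (p + 1) (d + 1) - dicksonCoeff p d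

theorem dicksonCoeff_eq_zero_of_lt : ∀ {p d : ℕ}, p < 2 * d → dicksonCoeff p d = 0
  | 0, 0, h | _ + 1, 0, h => by omega
  | 0, _ + 1, _ | 1, _ + 1, _ => rfl
  | p + 2, d + 1, h => by
    rw [dicksonCoeff, dicksonCoeff_eq_zero_of_lt (by omega), dicksonCoeff_eq_zero_of_lt (by omega),
      sub_zero]

theorem dicksonCoeff_zero_of_ne_zero {p : ℕ} (hp : p ≠ 0) : dicksonCoeff p 0 = 1 := by
  obtain ⟨p, rfl⟩ := Nat.exists_eq_succ_of_ne_zero hp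
  rfl

section CommRing

variable {R : Type*} [CommRing R]

theorem one_add_pow_eq_sum_dicksonCoeff (u : R) :
    ∀ {p N : ℕ}, p < N →
      1 + u ^ p = ∑ d ∈ range N, (dicksonCoeff p d : R) * u ^ d * (1 + u) ^ (p - 2 * d)
  | 0, N + 1, _ | 1, N + 1, _ => by norm_num [sum_range_succ', dicksonCoeff]
  | p + 2, N + 1, h => by
    have h₁ := one_add_pow_eq_sum_dicksonCoeff u (p := p + 1) (N := N + 1) (by omega)
    have h₀ := one_add_pow_eq_sum_dicksonCoeff u (p := p) (N := N) (by omega)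
    rw [sum_range_succ'] at h₁ ⊢
    calc 1 + u ^ (p + 2) = (1 + u) * (1 + u ^ (p + 1)) - u * (1 + u ^ p) := by ring
      _ = _ := by
        rw [h₁, h₀, mul_add, mul_sum, mul_sum, add_sub_right_comm, ← sum_sub_distrib]
        simp only [dicksonCoeff, Nat.mul_zero, Nat.sub_zero, pow_zero, mul_one, Int.cast_one,
          one_mul]
        refine congrArg₂ (· + ·) (sum_congr rfl fun d _ => ?_) (by ring)
        rcases Nat.lt_or_ge p (2 * d + 1) with hp | hp
        · rw [dicksonCoeff_eq_zero_of_lt (by omega), show p + 2 - 2 * (d + 1) = p - 2 * d by omega]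
          push_cast
          ring
        · rw [show p + 1 - 2 * (d + 1) = p - 2 * d - 1 by omega,
            show p + 2 - 2 * (d + 1) = p - 2 * d by omega,
            show p - 2 * d = p - 2 * d - 1 + 1 by omega]
          push_cast
          ring

def cEntry (c z : R) (m j : ℕ) : R :=
  if j = m then z ^ m else z ^ j + c ^ (m - j) * z ^ (2 * m - j)

def cVandermonde {r : ℕ} (c : R) (y : Fin r → R) : Matrix (Fin r) (Fin r) R :=
  .of fun i j => cEntry c (y i) (r - 1) j

def dicksonMatrix (c : R) (r : ℕ) : Matrix (Fin r) (Fin r) R :=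
  .of fun k j =>
    if (j : ℕ) = r - 1 then (1 : Matrix (Fin r) (Fin r) R) k j
    else ∑ d ∈ range r,
      if (k : ℕ) = j + 2 * d then (dicksonCoeff (r - 1 - j) d : R) * c ^ d else 0

theorem cVandermonde_eq_projVandermonde_mul {r : ℕ} (c : R) (y : Fin r → R) :
    cVandermonde c y = Matrix.projVandermonde y (fun i => 1 + c * y i ^ 2) * dicksonMatrix c r := by
  ext i j
  simp only [cVandermonde, dicksonMatrix, Matrix.mul_apply, Matrix.of_apply,
    Matrix.projVandermonde_apply]
  split_ifs with hj
  · rw [sum_eq_single j (fun k _ hk => by rw [Matrix.one_apply_ne hk, mul_zero]) (by simp)]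
    simp [cEntry, hj, Fin.val_rev, show r - (r - 1 + 1) = 0 by omega]
  · set w := 1 + c * y i ^ 2
    set p := r - 1 - (j : ℕ)
    have hterm : ∀ d, ∑ k : Fin r, y i ^ (k : ℕ) * w ^ (k.rev : ℕ) *
        (if (k : ℕ) = j + 2 * d then (dicksonCoeff p d : R) * c ^ d else 0) =
        (dicksonCoeff p d : R) * (c * y i ^ 2) ^ d * w ^ (p - 2 * d) * y i ^ (j : ℕ) := by
      intro d
      simp only [Fin.val_rev, mul_ite, mul_zero]
      rw [Fin.sum_univ_eq_sum_range (fun k => if k = j + 2 * d then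
        y i ^ k * w ^ (r - (k + 1)) * ((dicksonCoeff p d : R) * c ^ d) else 0), sum_ite_eq']
      split_ifs with hd
      · rw [show r - (j + 2 * d + 1) = p - 2 * d by omega]
        ring
      · rw [dicksonCoeff_eq_zero_of_lt (by simp at hd; omega)]
        simp
    simp only [mul_sum]
    rw [sum_comm, sum_congr rfl fun d _ => hterm d, ← sum_mul,
      ← one_add_pow_eq_sum_dicksonCoeff _ (by omega), cEntry, if_neg hj,
      show 2 * (r - 1) - j = j + 2 * p by omega]
    ring

theorem dicksonMatrix_det (c : R) (r : ℕ) : (dicksonMatrix c r).det = 1 := by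
  rw [Matrix.det_of_isLowerTriangular]
  · refine prod_eq_one fun j _ => ?_
    simp only [dicksonMatrix, Matrix.of_apply, Matrix.one_apply_eq]
    split_ifs with hj
    · rfl
    · rw [sum_eq_single_of_mem 0 (by simp; omega) (fun d _ hd => if_neg (by omega)),
        if_pos (by omega), dicksonCoeff_zero_of_ne_zero (by omega), Int.cast_one, pow_zero, mul_one]
  · intro k j hkj
    have hkj : k < j := hkj
    simp only [dicksonMatrix, Matrix.of_apply, Matrix.one_apply_ne hkj.ne]
    split_ifs
    · rfl
    · exact sum_eq_zero fun d _ => if_neg (by omega)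

theorem det_cVandermonde {r : ℕ} (c : R) (y : Fin r → R) :
    (cVandermonde c y).det = ∏ i, ∏ j ∈ Ioi i, (y j - y i) * (1 - c * y i * y j) := by
  rw [cVandermonde_eq_projVandermonde_mul, Matrix.det_mul, dicksonMatrix_det, mul_one,
    Matrix.det_projVandermonde]
  refine prod_congr rfl fun i _ => prod_congr rfl fun j _ => by ring

theorem det_cVandermonde_ne_zero [IsDomain R] {r : ℕ} {c : R} {y : Fin r → R}
    (hy : ∀ i j, i ≠ j → y i ≠ y j) (hc : ∀ i j, 1 - c * y i * y j ≠ 0) :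
    (cVandermonde c y).det ≠ 0 := by
  rw [det_cVandermonde]
  exact prod_ne_zero_iff.2 fun i _ => prod_ne_zero_iff.2 fun j hj =>
    mul_ne_zero (sub_ne_zero.2 (hy j i (mem_Ioi.1 hj).ne')) (hc i j)

theorem det_of_sum_rows {n ι : Type*} [Fintype n] [DecidableEq n] (A : n → Finset ι)
    (v : n → ι → n → R) :
    (Matrix.of fun i j => ∑ t ∈ A i, v i t j).det =
      ∑ s ∈ Fintype.piFinset A, (Matrix.of fun i => v i (s i)).det := by
  convert (Matrix.detRowAlternating (R := R) (n := n)).map_sum_finset v A using 2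
  · exact congrArg _ (funext fun i => (sum_fn (A i) (v i)).symm)
  · rfl

end CommRing

section Field

variable {K : Type*} [Field K]

theorem prod_div_eq_det_cVandermonde_div_det {r : ℕ} (a c : K) (x y : Fin r → K) :
    ∏ i, ∏ j ∈ Ioi i,
        (y i - y j) * (1 - a * y i * y j) / ((x i - x j) * (1 - c * x i * x j)) =
      (cVandermonde a y).det / (cVandermonde c x).det := by
  rw [det_cVandermonde, det_cVandermonde, ← prod_div_distrib]
  refine prod_congr rfl fun i _ => ?_
  rw [← prod_div_distrib]
  refine prod_congr rfl fun j _ => ?_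
  rw [← neg_sub (y j), ← neg_sub (x j), neg_mul, neg_mul, neg_div_neg_eq]

theorem summand_eq_det_div_det_cVandermonde {r : ℕ} (q a : K) (n : ℕ) (x : Fin r → K)
    (s : Fin r → ℕ) :
    (∏ i, ∏ j ∈ Ioi i,
        ((x i * q ^ s i - x j * q ^ s j) * (1 - a * x i * x j * q ^ (s i + s j))) /
          ((x i - x j) * (1 - a * x i * x j * q ^ n))) *
        ∏ i, q ^ (-(((r - 1) * s i : ℕ) : ℤ)) =
      (Matrix.of fun i (j : Fin r) =>
          q ^ (-(((r - 1) * s i : ℕ) : ℤ)) * cEntry a (x i * q ^ s i) (r - 1) j).det /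
        (cVandermonde (a * q ^ n) x).det := by
  rw [show (Matrix.of fun i (j : Fin r) =>
        q ^ (-(((r - 1) * s i : ℕ) : ℤ)) * cEntry a (x i * q ^ s i) (r - 1) j) =
      Matrix.of fun i j =>
        q ^ (-(((r - 1) * s i : ℕ) : ℤ)) * cVandermonde a (fun i => x i * q ^ s i) i j from rfl,
    Matrix.det_mul_column, mul_div_assoc _ (cVandermonde a _).det,
    ← prod_div_eq_det_cVandermonde_div_det, mul_comm]
  congr 1
  exact prod_congr rfl fun i _ => prod_congr rfl fun j _ => by ring

theorem geom_sum_inv_eq {x : K} (hx : x ≠ 0) (n : ℕ) :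
    ∑ t ∈ range (n + 1), x⁻¹ ^ t = (x ^ n)⁻¹ * ∑ t ∈ range (n + 1), x ^ t := by
  rw [mul_sum, ← sum_range_reflect]
  refine sum_congr rfl fun t ht => ?_
  rw [add_tsub_cancel_right, inv_pow, pow_sub₀ _ hx (by simpa [Nat.lt_succ_iff] using ht)]
  field_simp

theorem sum_zpow_mul_cEntry {q : K} (hq : q ≠ 0) (a z : K) {m j : ℕ} (hj : j ≤ m) (n : ℕ) :
    ∑ t ∈ range (n + 1), q ^ (-((m * t : ℕ) : ℤ)) * cEntry a (z * q ^ t) m j =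
      (∑ t ∈ range (n + 1), (q ^ (m - j))⁻¹ ^ t) * cEntry (a * q ^ n) z m j := by
  obtain ⟨k, rfl⟩ := Nat.exists_eq_add_of_le hj
  rw [Nat.add_sub_cancel_left]
  rcases Nat.eq_zero_or_pos k with rfl | hk
  · have hterm : ∀ t, q ^ (-((j * t : ℕ) : ℤ)) * (z * q ^ t) ^ j = z ^ j := fun t => by
      rw [zpow_neg, zpow_natCast, mul_pow, ← pow_mul, mul_comm t j]
      field_simp
    simp only [add_zero, cEntry, ↓reduceIte, hterm, pow_zero, inv_one, one_pow, sum_const,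
      card_range, nsmul_eq_mul, Nat.cast_add, Nat.cast_one, mul_one]
  have hterm : ∀ t, q ^ (-(((j + k) * t : ℕ) : ℤ)) * cEntry a (z * q ^ t) (j + k) j =
      z ^ j * (q ^ k)⁻¹ ^ t + a ^ k * z ^ (j + 2 * k) * (q ^ k) ^ t := by
    intro t
    rw [zpow_neg, zpow_natCast, cEntry, if_neg (by omega), Nat.add_sub_cancel_left,
      show 2 * (j + k) - j = j + 2 * k by omega, inv_pow, ← pow_mul]
    field_simp
    ring
  have hreflect : ∑ t ∈ range (n + 1), (q ^ k) ^ t =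
      (q ^ k) ^ n * ∑ t ∈ range (n + 1), (q ^ k)⁻¹ ^ t := by
    rw [geom_sum_inv_eq (pow_ne_zero k hq),
      mul_inv_cancel_left₀ (pow_ne_zero n (pow_ne_zero k hq))]
  rw [sum_congr rfl fun t _ => hterm t, sum_add_distrib, ← mul_sum, ← mul_sum, hreflect, cEntry,
    if_neg (by omega), Nat.add_sub_cancel_left, show 2 * (j + k) - j = j + 2 * k by omega]
  ring

theorem prod_geom_sum_mul_qPoch (q : K) (n m : ℕ) :
    (∏ k ∈ range m, ∑ t ∈ range (n + 1), (q ^ (k + 1)) ^ t) * qPoch q q m =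
      qPoch (q ^ (n + 1)) (q ^ (n + 1)) m := by
  rw [qPoch, qPoch, ← prod_mul_distrib]
  refine prod_congr rfl fun k _ => ?_
  rw [← pow_succ', geom_sum_mul_neg, ← pow_mul, ← pow_mul, ← pow_add]
  ring_nf

theorem prod_geom_sum_inv_eq {q : K} (hq : q ≠ 0) {r : ℕ} (hr : 1 ≤ r) (n : ℕ)
    (hqq : qPoch q q (r - 1) ≠ 0) :
    ∏ k ∈ range r, ∑ t ∈ range (n + 1), (q ^ k)⁻¹ ^ t =
      ((n : K) + 1) * qPoch (q ^ (n + 1)) (q ^ (n + 1)) (r - 1) /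
        (q ^ (n * (r * (r - 1) / 2)) * qPoch q q (r - 1)) := by
  have hpow : ∏ k ∈ range r, (q ^ k) ^ n = q ^ (n * (r * (r - 1) / 2)) := by
    rw [prod_pow, prod_pow_eq_pow_sum, sum_range_id, ← pow_mul, mul_comm]
  obtain ⟨m, rfl⟩ := Nat.exists_eq_add_of_le' hr
  rw [prod_congr rfl fun k _ => geom_sum_inv_eq (pow_ne_zero k hq) n, prod_mul_distrib,
    prod_inv_distrib, hpow, prod_range_succ', Nat.add_sub_cancel, ← prod_geom_sum_mul_qPoch q n m]
  rw [Nat.add_sub_cancel] at hqq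
  simp only [pow_zero, one_pow, sum_const, card_range, nsmul_eq_mul, mul_one, Nat.cast_add,
    Nat.cast_one]
  field_simp

end Field

/-- The first `C_r` evaluation allied to Schlosser's sum. -/
theorem cr_sum_eval_one {K : Type*} [Field K] (q a : K) (r n : ℕ)
    (x : Fin r → K) (hr : 1 ≤ r) (hq : q ≠ 0)
    (hxx : ∀ i j, i ≠ j → x i ≠ x j)
    (haxx : ∀ i j : Fin r, 1 - a * x i * x j * q ^ n ≠ 0)
    (hqq : qPoch q q (r - 1) ≠ 0) :
    ∑ s ∈ Fintype.piFinset (fun _ : Fin r => Finset.range (n + 1)),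
      (∏ i : Fin r, ∏ j ∈ Finset.Ioi i,
          ((x i * q ^ s i - x j * q ^ s j) * (1 - a * x i * x j * q ^ (s i + s j))) /
            ((x i - x j) * (1 - a * x i * x j * q ^ n))) *
      ∏ i : Fin r, q ^ (-(((r - 1) * s i : ℕ) : ℤ))
    = ((n : K) + 1) * qPoch (q ^ (n + 1)) (q ^ (n + 1)) (r - 1) /
        (q ^ (n * (r * (r - 1) / 2)) * qPoch q q (r - 1)) := by
  set D := (cVandermonde (a * q ^ n) x).det
  have hD : D ≠ 0 := det_cVandermonde_ne_zero hxx fun i j => by convert haxx i j using 1; ring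
  set row : Fin r → ℕ → Fin r → K := fun i t j =>
    q ^ (-(((r - 1) * t : ℕ) : ℤ)) * cEntry a (x i * q ^ t) (r - 1) j
  calc _ = (∑ s ∈ Fintype.piFinset (fun _ : Fin r => range (n + 1)),
        (Matrix.of fun i => row i (s i)).det) / D := by
        rw [sum_div]
        exact sum_congr rfl fun s _ => summand_eq_det_div_det_cVandermonde q a n x s
    _ = (Matrix.of fun i j => ∑ t ∈ range (n + 1), row i t j).det / D := by rw [det_of_sum_rows]
    _ = ∏ j : Fin r, ∑ t ∈ range (n + 1), (q ^ (r - 1 - j : ℕ))⁻¹ ^ t := by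
      simp only [row, sum_zpow_mul_cEntry hq _ _ (Nat.le_sub_one_of_lt (Fin.is_lt _))]
      exact (congrArg (· / D) (Matrix.det_mul_row _ (cVandermonde (a * q ^ n) x))).trans
        (mul_div_cancel_right₀ _ hD)
    _ = _ := by
      rw [Fin.prod_univ_eq_prod_range
          (fun k => ∑ t ∈ range (n + 1), (q ^ (r - 1 - k))⁻¹ ^ t),
        prod_range_reflect (fun k => ∑ t ∈ range (n + 1), (q ^ k)⁻¹ ^ t),
        prod_geom_sum_inv_eq hq hr n hqq]
end
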